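/- arXiv:2111.00652 — 4 statements merged into one kernel-verified Lean document; each statement's English description precedes it below -/
import Mathlib

section
/- Let n, k be positive integers, β₁ ∈ (0, n/k), and φ(τ) = (1/k)(τ^n-1)/τ^{n-1} + ((β₁-n/k)/(n+1))(τ^{n+1}-1)/τ^{n-1}. Then for any T > 1 with φ(T) = 0, one has (1/k - β₂)·T^n = β₁ + 1/k, where -β₂ := φ'(T). -/
/-!
Write `φ = N / τ^(n-1)` with `N τ = a (τ^n - 1) + b (τ^(n+1) - 1)`, `a = 1/k`,
`b = (β₁ - n/k)/(n+1)`. At a root `T` of `N` the quotient rule collapses to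
`φ'(T) = N'(T) / T^(n-1) = n a + (n+1) b T`. Since `(n+1) b = β₁ - n a`, multiplying
`N(T) = 0` by `n+1` gives exactly `(a - β₂) T^n = β₁ + a`.
-/

theorem HasDerivAt.div_of_eq_zero {𝕜 : Type*} [NontriviallyNormedField 𝕜] {f g : 𝕜 → 𝕜}
    {f' g' x : 𝕜} (hf : HasDerivAt f f' x) (hg : HasDerivAt g g' x) (hgx : g x ≠ 0)
    (hfx : f x = 0) : HasDerivAt (fun y => f y / g y) (f' / g x) x := by
  have h := hf.div hg hgx
  rwa [hfx, zero_mul, sub_zero, sq, mul_div_mul_right _ _ hgx] at h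

theorem hasDerivAt_pow_sub_one_div_pow_of_eq_zero {n : ℕ} (hn : 1 ≤ n) {a b T : ℝ} (hT : T ≠ 0)
    (hroot : a * (T ^ n - 1) + b * (T ^ (n + 1) - 1) = 0) :
    HasDerivAt (fun τ => (a * (τ ^ n - 1) + b * (τ ^ (n + 1) - 1)) / τ ^ (n - 1))
      (n * a + (n + 1) * b * T) T := by
  obtain ⟨m, rfl⟩ : ∃ m, n = m + 1 := ⟨n - 1, by omega⟩
  have hN : HasDerivAt (fun τ => a * (τ ^ (m + 1) - 1) + b * (τ ^ (m + 1 + 1) - 1))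
      (a * ((m + 1 : ℕ) * T ^ m) + b * ((m + 1 + 1 : ℕ) * T ^ (m + 1))) T :=
    (((hasDerivAt_pow _ T).sub_const 1).const_mul a).add
      (((hasDerivAt_pow _ T).sub_const 1).const_mul b)
  rw [Nat.add_sub_cancel]
  refine (hN.div_of_eq_zero (hasDerivAt_pow m T) (pow_ne_zero m hT) hroot).congr_deriv ?_
  field_simp
  push_cast
  ring

theorem stmt2_general (n k : ℕ) (hn : 1 ≤ n) (β₁ : ℝ)
    (φ : ℝ → ℝ)
    (hφ : ∀ τ : ℝ, φ τ = (1 / (k : ℝ)) * (τ ^ n - 1) / τ ^ (n - 1)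
        + ((β₁ - (n : ℝ) / k) / (n + 1)) * (τ ^ (n + 1) - 1) / τ ^ (n - 1))
    (T : ℝ) (hT : 1 < T) (hroot : φ T = 0)
    (β₂ : ℝ) (hβ₂ : -β₂ = deriv φ T) :
    (1 / (k : ℝ) - β₂) * T ^ n = β₁ + 1 / k := by
  set a : ℝ := 1 / k
  set b : ℝ := (β₁ - n / k) / (n + 1)
  have hφ_eq : φ = fun τ => (a * (τ ^ n - 1) + b * (τ ^ (n + 1) - 1)) / τ ^ (n - 1) := by
    funext τ
    rw [hφ]
    ring
  have hb : (n + 1) * b = β₁ - n * a := by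
    simp only [a, b]
    field_simp
  clear_value a b
  have hT0 : T ≠ 0 := by positivity
  have hN : a * (T ^ n - 1) + b * (T ^ (n + 1) - 1) = 0 := by
    rw [hφ_eq] at hroot
    exact (div_eq_zero_iff.mp hroot).resolve_right (pow_ne_zero _ hT0)
  rw [hφ_eq, (hasDerivAt_pow_sub_one_div_pow_of_eq_zero hn hT0 hN).deriv] at hβ₂
  linear_combination (n + 1 : ℝ) * hN + T ^ n * hβ₂ + hb

/-- Profile identity: if `φ(τ) = (1/k)(τ^n-1)/τ^{n-1} + ((β₁-n/k)/(n+1))(τ^{n+1}-1)/τ^{n-1}`,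
`T > 1` satisfies `φ(T) = 0`, and `β₂ := -φ'(T)`, then `(1/k - β₂)·T^n = β₁ + 1/k`. -/
theorem stmt2 (n k : ℕ) (hn : 1 ≤ n) (hk : 1 ≤ k) (β₁ : ℝ)
    (hβ₁ : β₁ ∈ Set.Ioo 0 ((n : ℝ) / k))
    (φ : ℝ → ℝ)
    (hφ : ∀ τ : ℝ, φ τ = (1 / (k : ℝ)) * (τ ^ n - 1) / τ ^ (n - 1)
        + ((β₁ - (n : ℝ) / k) / (n + 1)) * (τ ^ (n + 1) - 1) / τ ^ (n - 1))
    (T : ℝ) (hT : 1 < T) (hroot : φ T = 0)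
    (β₂ : ℝ) (hβ₂ : -β₂ = deriv φ T) :
    (1 / (k : ℝ) - β₂) * T ^ n = β₁ + 1 / k :=
  stmt2_general n k hn β₁ φ hφ T hT hroot β₂ hβ₂
end

section
/- Let n, k be positive integers and β₂ ∈ (0, 1/k). Define φ(τ) = (1/k)(τ^n-1)/τ^{n-1} - ((n/k+β₂)/(n+1))(τ^{n+1}-1)/τ^{n-1}. If t ∈ (0,1) satisfies φ(t) = 0 and β₁ := φ'(t), then (1/k + β₁)·t^n = 1/k - β₂. -/
/-- For the second family: if `φ(τ) = (1/k)(τ^n-1)/τ^{n-1} - ((n/k+β₂)/(n+1))(τ^{n+1}-1)/τ^{n-1}`,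
`t ∈ (0,1)` satisfies `φ(t) = 0`, and `β₁ := φ'(t)`, then `(1/k + β₁)·t^n = 1/k - β₂`. -/
theorem stmt3 (n k : ℕ) (hn : 1 ≤ n) (hk : 1 ≤ k) (β₂ : ℝ)
    (hβ₂ : β₂ ∈ Set.Ioo 0 (1 / (k : ℝ)))
    (φ : ℝ → ℝ)
    (hφ : ∀ τ : ℝ, φ τ = (1 / (k : ℝ)) * (τ ^ n - 1) / τ ^ (n - 1)
        - (((n : ℝ) / k + β₂) / (n + 1)) * (τ ^ (n + 1) - 1) / τ ^ (n - 1))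
    (t : ℝ) (ht : t ∈ Set.Ioo (0 : ℝ) 1) (hroot : φ t = 0)
    (β₁ : ℝ) (hβ₁ : β₁ = deriv φ t) :
    (1 / (k : ℝ) + β₁) * t ^ n = 1 / k - β₂ := by
  obtain ⟨ht0, ht1⟩ := ht
  set c : ℝ := ((n : ℝ) / k + β₂) / (n + 1) with hc
  have ht0' : t ≠ 0 := ne_of_gt ht0
  have htpow : t ^ (n - 1) ≠ 0 := pow_ne_zero _ ht0'
  have hk0 : (k : ℝ) ≠ 0 := Nat.cast_ne_zero.mpr (by omega)
  have hn1 : (n : ℝ) + 1 ≠ 0 := by positivity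
  -- rewrite φ with a single quotient
  have hφeq : φ = fun τ : ℝ =>
      ((1 / (k : ℝ)) * (τ ^ n - 1) - c * (τ ^ (n + 1) - 1)) / τ ^ (n - 1) := by
    funext τ
    rw [hφ]
    ring
  -- numerator vanishes at t
  have hft : (1 / (k : ℝ)) * (t ^ n - 1) - c * (t ^ (n + 1) - 1) = 0 := by
    have := hroot
    rw [hφeq] at this
    simp only [div_eq_zero_iff] at this
    tauto
  -- derivative computation
  have hfd : HasDerivAt (fun τ : ℝ => (1 / (k : ℝ)) * (τ ^ n - 1) - c * (τ ^ (n + 1) - 1))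
      ((1 / (k : ℝ)) * ((n : ℝ) * t ^ (n - 1)) - c * (((n : ℝ) + 1) * t ^ n)) t := by
    have h1 : HasDerivAt (fun τ : ℝ => (1 / (k : ℝ)) * (τ ^ n - 1))
        ((1 / (k : ℝ)) * ((n : ℝ) * t ^ (n - 1))) t :=
      ((hasDerivAt_pow n t).sub_const 1).const_mul _
    have h2 : HasDerivAt (fun τ : ℝ => c * (τ ^ (n + 1) - 1))
        (c * (((n : ℝ) + 1) * t ^ n)) t := by
      have := ((hasDerivAt_pow (n + 1) t).sub_const 1).const_mul c
      simpa using this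
    exact h1.sub h2
  have hgd : HasDerivAt (fun τ : ℝ => τ ^ (n - 1)) ((↑(n - 1) : ℝ) * t ^ (n - 1 - 1)) t :=
    hasDerivAt_pow (n - 1) t
  have hd := hfd.div hgd htpow
  have hderiv : deriv φ t =
      (((1 / (k : ℝ)) * ((n : ℝ) * t ^ (n - 1)) - c * (((n : ℝ) + 1) * t ^ n)) * t ^ (n - 1)
        - ((1 / (k : ℝ)) * (t ^ n - 1) - c * (t ^ (n + 1) - 1)) * ((↑(n - 1) : ℝ) * t ^ (n - 1 - 1)))
        / (t ^ (n - 1)) ^ 2 := by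
    rw [hφeq]
    exact hd.deriv
  rw [hft] at hderiv
  have hβ₁' : β₁ = ((1 / (k : ℝ)) * ((n : ℝ) * t ^ (n - 1)) - c * (((n : ℝ) + 1) * t ^ n))
      / t ^ (n - 1) := by
    rw [hβ₁, hderiv]
    field_simp
    ring
  -- algebra
  have htn : t ^ n = t ^ (n - 1) * t := by
    rw [← pow_succ, Nat.sub_add_cancel hn]
  have hcc : c * ((n : ℝ) + 1) = (n : ℝ) / k + β₂ := div_mul_cancel₀ _ hn1
  have hβv : β₁ = (n : ℝ) / k - ((n : ℝ) / k + β₂) * t := by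
    rw [hβ₁', htn, div_eq_iff htpow]
    linear_combination (-(t ^ (n - 1) * t)) * hcc
  rw [hβv]
  linear_combination ((n : ℝ) + 1) * hft + (t ^ (n + 1) - 1) * hcc
end

section
/- Let n, k be positive integers. For β₂ ∈ (0, 1/k), every root τ ≠ 1 of the polynomial -((n/k+β₂)/(n+1))τ^n + ((1/k-β₂)/(n+1))(τ^{n-1}+⋯+τ+1) tends to 0 as β₂ ↗ 1/k; more precisely, every such root α satisfies |α| = O((k/(n+1))^{1/n}(1/k-β₂)^{1/n}). -/
/-!
Taking norms in `(n/k + β₂) α^n = (1/k - β₂) ∑_{j<n} α^j` gives `a r^n ≤ b ∑_{j<n} r^j` for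
`r = ‖α‖`, `a = n/k`, `b = 1/k - β₂`, where `n b ≤ a`. Such an inequality forces `r ≤ 1`: for
`r > 1` we have `r ∑_{j<n} r^j ≤ n r^n`, hence `a r^(n+1) ≤ n b r^n ≤ a r^n`. Then the geometric sum is
at most `n`, so `r^n ≤ k (1/k - β₂)`, and `C = (n+1)^(1/n)` works.
-/

open Finset

lemma geom_sum_le_card_of_le_one {r : ℝ} (hr₀ : 0 ≤ r) (hr₁ : r ≤ 1) (n : ℕ) :
    ∑ j ∈ range n, r ^ j ≤ n := by
  simpa using sum_le_card_nsmul (range n) (fun j ↦ r ^ j) 1 fun j _ ↦ pow_le_one₀ hr₀ hr₁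

lemma mul_geom_sum_le_of_one_le {r : ℝ} (hr : 1 ≤ r) (n : ℕ) :
    r * ∑ j ∈ range n, r ^ j ≤ n * r ^ n := by
  rw [mul_sum]
  simpa using sum_le_card_nsmul (range n) (fun j ↦ r * r ^ j) (r ^ n) fun j hj ↦ by
    rw [← pow_succ']
    exact pow_le_pow_right₀ hr (mem_range.mp hj)

section GeomSumBound

variable {a b r : ℝ} {n : ℕ}

lemma le_one_of_mul_pow_le_geom_sum (ha : 0 < a) (hb : 0 ≤ b) (hab : n * b ≤ a)
    (h : a * r ^ n ≤ b * ∑ j ∈ range n, r ^ j) : r ≤ 1 := by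
  by_contra! hr₁
  have hpos : 0 < a * r ^ n := by positivity
  have : a * r ^ n * r ≤ a * r ^ n * 1 :=
    calc a * r ^ n * r ≤ b * (r * ∑ j ∈ range n, r ^ j) :=
          (mul_le_mul_of_nonneg_right h (by positivity)).trans_eq (by ring)
      _ ≤ b * (n * r ^ n) := mul_le_mul_of_nonneg_left (mul_geom_sum_le_of_one_le hr₁.le n) hb
      _ = n * b * r ^ n := by ring
      _ ≤ a * r ^ n * 1 := by rw [mul_one]; gcongr
  exact hr₁.not_ge (le_of_mul_le_mul_left this hpos)

lemma mul_pow_le_of_mul_pow_le_geom_sum (ha : 0 < a) (hb : 0 ≤ b) (hr : 0 ≤ r)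
    (hab : n * b ≤ a) (h : a * r ^ n ≤ b * ∑ j ∈ range n, r ^ j) : a * r ^ n ≤ n * b :=
  calc a * r ^ n ≤ b * ∑ j ∈ range n, r ^ j := h
    _ ≤ b * n := by
      gcongr
      exact geom_sum_le_card_of_le_one hr (le_one_of_mul_pow_le_geom_sum ha hb hab h) n
    _ = n * b := mul_comm _ _

end GeomSumBound

lemma norm_mul_pow_le_of_eq_mul_geom_sum {𝕜 : Type*} [NormedDivisionRing 𝕜] {c d x : 𝕜} {n : ℕ}
    (h : c * x ^ n = d * ∑ j ∈ range n, x ^ j) :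
    ‖c‖ * ‖x‖ ^ n ≤ ‖d‖ * ∑ j ∈ range n, ‖x‖ ^ j :=
  calc ‖c‖ * ‖x‖ ^ n = ‖d‖ * ‖∑ j ∈ range n, x ^ j‖ := by rw [← norm_pow, ← norm_mul, h, norm_mul]
    _ ≤ ‖d‖ * ∑ j ∈ range n, ‖x‖ ^ j := by
      gcongr
      exact (norm_sum_le _ _).trans_eq (by simp only [norm_pow])

lemma le_rpow_one_div_of_pow_le {r y : ℝ} {n : ℕ} (hr : 0 ≤ r) (hy : 0 ≤ y) (hn : n ≠ 0)
    (h : r ^ n ≤ y) : r ≤ y ^ ((1 : ℝ) / n) := by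
  rw [one_div, Real.le_rpow_inv_iff_of_pos hr hy (by positivity), Real.rpow_natCast]
  exact h

/-- Every root `α ≠ 1` of
`-((n/k+β₂)/(n+1))τ^n + ((1/k-β₂)/(n+1))(τ^{n-1}+⋯+τ+1)` satisfies
`|α| ≤ C (k/(n+1))^{1/n} (1/k-β₂)^{1/n}` for a constant `C` independent of `β₂ ∈ (0,1/k)`;
in particular all such roots tend to `0` as `β₂ ↗ 1/k`. -/
theorem stmt7 (n k : ℕ) (hn : 1 ≤ n) (hk : 1 ≤ k) :
    ∃ C > 0, ∀ β₂ ∈ Set.Ioo (0 : ℝ) (1 / (k : ℝ)), ∀ α : ℂ, α ≠ 1 →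
      (-((((n : ℂ) / k + (β₂ : ℂ)) / (n + 1)) * α ^ n)
        + ((1 / (k : ℂ) - (β₂ : ℂ)) / (n + 1)) * (∑ j ∈ Finset.range n, α ^ j) = 0) →
      ‖α‖ ≤
        C * ((k : ℝ) / (n + 1)) ^ ((1 : ℝ) / n) * (1 / (k : ℝ) - β₂) ^ ((1 : ℝ) / n) := by
  refine ⟨((n : ℝ) + 1) ^ ((1 : ℝ) / n), by positivity, ?_⟩
  rintro β₂ ⟨hβ₀, hβ₁⟩ α - heq
  have hk₀ : (0 : ℝ) < k := by exact_mod_cast hk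
  have hn₀ : (0 : ℝ) < n := by exact_mod_cast hn
  have hε : 0 < 1 / (k : ℝ) - β₂ := sub_pos.mpr hβ₁
  have hroot : (((n / k + β₂ : ℝ)) : ℂ) * α ^ n = ((1 / k - β₂ : ℝ) : ℂ) * ∑ j ∈ range n, α ^ j := by
    have : (n : ℂ) + 1 ≠ 0 := by exact_mod_cast n.succ_ne_zero
    push_cast
    field_simp at heq
    linear_combination -heq
  have hnorm := norm_mul_pow_le_of_eq_mul_geom_sum hroot
  rw [Complex.norm_of_nonneg (by positivity), Complex.norm_of_nonneg hε.le] at hnorm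
  have hpow : n / k * ‖α‖ ^ n ≤ n * (1 / k - β₂) :=
    mul_pow_le_of_mul_pow_le_geom_sum (by positivity) hε.le (norm_nonneg α)
      (by rw [mul_sub, mul_one_div]; linarith [mul_pos hn₀ hβ₀])
      (le_trans (by gcongr; linarith) hnorm)
  have hpow' : ‖α‖ ^ n ≤ k * (1 / k - β₂) := by
    rw [div_mul_eq_mul_div, div_le_iff₀ hk₀] at hpow
    nlinarith
  calc ‖α‖ ≤ (k * (1 / k - β₂)) ^ ((1 : ℝ) / n) :=
        le_rpow_one_div_of_pow_le (norm_nonneg α) (by positivity) (by omega) hpow'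
    _ = ((n + 1) * (k / (n + 1))) ^ ((1 : ℝ) / n) * (1 / k - β₂) ^ ((1 : ℝ) / n) := by
        rw [mul_div_cancel₀ _ (by positivity), Real.mul_rpow hk₀.le hε.le]
    _ = _ := by rw [Real.mul_rpow (by positivity) (by positivity)]
end

section
/- For n = 2, k = 1 and β₂ ∈ (0,1), set β₁ = 3/2 + β₂/2 - (1/2)√((1-β₂)(3β₂+9)) and t = (1-β₂+√((1-β₂)(3β₂+9)))/(2(2+β₂)), and T = 1 + 3(√(1+(2/3)β₁-(1/3)β₁²)+β₁-1)/(4-2β₁). Then T = 2(2+β₂)/(4-2β₁), t = (4-2β₁)/(2(2+β₂)), and hence T = 1/t. -/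
/-!
Put `s = √((1-β₂)(3β₂+9))`, so that `β₁ = (3 + β₂ - s)/2` and `4 - 2β₁ = 1 - β₂ + s`.
Using `s² = (1-β₂)(3β₂+9)`, the radicand `1 + (2/3)β₁ - (1/3)β₁²` is the perfect square
`((3 + 3β₂ + s)/6)²`, and then the numerator `4 - 2β₁ + 3(√… + β₁ - 1)` of `T` collapses to
`2(2+β₂)`. The formula for `t` is just `4 - 2β₁ = 1 - β₂ + s`, and `T = 1/t` follows.
-/

namespace KEEFirstHirzebruch

variable {a b s : ℝ}

lemma radicand_eq_sq (hs : s ^ 2 = (1 - b) * (3 * b + 9)) (ha : a = 3 / 2 + b / 2 - 1 / 2 * s) :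
    1 + 2 / 3 * a - 1 / 3 * a ^ 2 = ((3 + 3 * b + s) / 6) ^ 2 := by
  subst ha
  linear_combination (-1 / 9 : ℝ) * hs

lemma sqrt_radicand (hs : s ^ 2 = (1 - b) * (3 * b + 9)) (hs₀ : 0 ≤ s) (hb : -1 ≤ b)
    (ha : a = 3 / 2 + b / 2 - 1 / 2 * s) :
    √(1 + 2 / 3 * a - 1 / 3 * a ^ 2) = (3 + 3 * b + s) / 6 := by
  rw [radicand_eq_sq hs ha, Real.sqrt_sq (by linarith)]

lemma one_add_div_eq (hs : s ^ 2 = (1 - b) * (3 * b + 9)) (hs₀ : 0 ≤ s) (hb : -1 ≤ b)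
    (ha : a = 3 / 2 + b / 2 - 1 / 2 * s) (hden : 4 - 2 * a ≠ 0) :
    1 + 3 * (√(1 + 2 / 3 * a - 1 / 3 * a ^ 2) + a - 1) / (4 - 2 * a) =
      2 * (2 + b) / (4 - 2 * a) := by
  rw [sqrt_radicand hs hs₀ hb ha, one_add_div hden]
  congr 1
  rw [ha]
  ring

end KEEFirstHirzebruch

open KEEFirstHirzebruch in
/-- On `𝔽₁` (`n = 2`, `k = 1`): for `β₂ ∈ (0,1)`, with
`β₁ = 3/2 + β₂/2 - (1/2)√((1-β₂)(3β₂+9))`, `t = (1-β₂+√((1-β₂)(3β₂+9)))/(2(2+β₂))`,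
and `T = 1 + 3(√(1+(2/3)β₁-(1/3)β₁²)+β₁-1)/(4-2β₁)`, one has
`T = 2(2+β₂)/(4-2β₁)`, `t = (4-2β₁)/(2(2+β₂))`, and `T = 1/t`. -/
theorem stmt14 (β₂ : ℝ) (hβ₂ : β₂ ∈ Set.Ioo (0 : ℝ) 1)
    (β₁ t T : ℝ)
    (hβ₁ : β₁ = 3 / 2 + β₂ / 2 - (1 / 2) * Real.sqrt ((1 - β₂) * (3 * β₂ + 9)))
    (ht : t = (1 - β₂ + Real.sqrt ((1 - β₂) * (3 * β₂ + 9))) / (2 * (2 + β₂)))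
    (hT : T = 1 + 3 * (Real.sqrt (1 + (2 / 3) * β₁ - (1 / 3) * β₁ ^ 2) + β₁ - 1)
        / (4 - 2 * β₁)) :
    T = 2 * (2 + β₂) / (4 - 2 * β₁) ∧ t = (4 - 2 * β₁) / (2 * (2 + β₂)) ∧ T = 1 / t := by
  obtain ⟨hβ₂_pos, hβ₂_lt_one⟩ := hβ₂
  set s := √((1 - β₂) * (3 * β₂ + 9))
  have hs : s ^ 2 = (1 - β₂) * (3 * β₂ + 9) := Real.sq_sqrt (by nlinarith)
  have hs₀ : 0 ≤ s := Real.sqrt_nonneg _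
  have hden : 4 - 2 * β₁ = 1 - β₂ + s := by rw [hβ₁]; ring
  have hT' : T = 2 * (2 + β₂) / (4 - 2 * β₁) :=
    hT ▸ one_add_div_eq hs hs₀ (by linarith) hβ₁ (by rw [hden]; linarith)
  have ht' : t = (4 - 2 * β₁) / (2 * (2 + β₂)) := by rw [ht, hden]
  exact ⟨hT', ht', by rw [hT', ht', one_div_div]⟩
end
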